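/- arXiv:2506.05225 — 3 statements merged into one kernel-verified Lean document; each statement's English description precedes it below -/
import Mathlib

section
/- Under the model p = h(X) + ω with E[ω | Z] = 0 and completeness of Z with respect to X, the function h is identified: any h̃ with E[p − h̃(X) | Z] = 0 a.s. satisfies h̃(X) = h(X) almost surely. -/
open MeasureTheory

theorem condExp_sub_ae_eq_zero {α E : Type*} [NormedAddCommGroup E] [NormedSpace ℝ E]
    [CompleteSpace E] {m m0 : MeasurableSpace α} {μ : Measure α} {f g : α → E}
    (hf : Integrable f μ) (hg : Integrable g μ) (hf0 : μ[f | m] =ᵐ[μ] 0)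
    (hg0 : μ[g | m] =ᵐ[μ] 0) :
    μ[f - g | m] =ᵐ[μ] 0 :=
  (condExp_sub hf hg m).trans (by filter_upwards [hf0, hg0] with a ha hb; simp [ha, hb])

theorem stmt_1_general {Ω : Type*} [MeasurableSpace Ω] (μ : Measure Ω)
    {n m : ℕ} (p : Ω → ℝ) (X : Ω → (Fin n → ℝ)) (Z : Ω → (Fin m → ℝ))
    (hpint : Integrable p μ)
    (complete : ∀ B : (Fin n → ℝ) → ℝ, Measurable B → Integrable (B ∘ X) μ →
      μ[B ∘ X | MeasurableSpace.comap Z inferInstance] =ᵐ[μ] 0 → B ∘ X =ᵐ[μ] 0)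
    (h : (Fin n → ℝ) → ℝ) (hh : Measurable h) (hhint : Integrable (h ∘ X) μ)
    (hmoment : μ[(fun a => p a - h (X a)) | MeasurableSpace.comap Z inferInstance] =ᵐ[μ] 0)
    (htilde : (Fin n → ℝ) → ℝ) (hht : Measurable htilde)
    (hhtint : Integrable (htilde ∘ X) μ)
    (hmoment' : μ[(fun a => p a - htilde (X a)) | MeasurableSpace.comap Z inferInstance]
      =ᵐ[μ] 0) :
    (fun a => htilde (X a)) =ᵐ[μ] (fun a => h (X a)) := by
  have hdiff : (fun a => p a - h (X a)) - (fun a => p a - htilde (X a))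
      = (htilde - h) ∘ X := by
    funext a
    simp only [Pi.sub_apply, Function.comp_apply]
    ring
  have hmoment_diff := condExp_sub_ae_eq_zero (f := fun a => p a - h (X a))
    (g := fun a => p a - htilde (X a)) (hpint.sub hhint) (hpint.sub hhtint) hmoment hmoment'
  rw [hdiff] at hmoment_diff
  filter_upwards [complete _ (hht.sub hh) (hhtint.sub hhint) hmoment_diff] with a ha
  exact sub_eq_zero.mp ha

/-- Identification of the flexible supply function (Theorem 1 of the paper):
under the model `p = h(X) + ω` with `E[ω ∣ Z] = 0` and completeness of `Z` with respect to
`X`, any `h̃` satisfying the same conditional moment restriction agrees with `h` a.s. -/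
theorem stmt_1 {Ω : Type*} [MeasurableSpace Ω] (μ : Measure Ω) [IsProbabilityMeasure μ]
    {n m : ℕ} (p : Ω → ℝ) (X : Ω → (Fin n → ℝ)) (Z : Ω → (Fin m → ℝ))
    (hX : Measurable X) (hZ : Measurable Z) (hp : Measurable p) (hpint : Integrable p μ)
    (complete : ∀ B : (Fin n → ℝ) → ℝ, Measurable B → Integrable (B ∘ X) μ →
      μ[B ∘ X | MeasurableSpace.comap Z inferInstance] =ᵐ[μ] 0 → B ∘ X =ᵐ[μ] 0)
    (h : (Fin n → ℝ) → ℝ) (hh : Measurable h) (hhint : Integrable (h ∘ X) μ)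
    (hmoment : μ[(fun a => p a - h (X a)) | MeasurableSpace.comap Z inferInstance] =ᵐ[μ] 0)
    (htilde : (Fin n → ℝ) → ℝ) (hht : Measurable htilde)
    (hhtint : Integrable (htilde ∘ X) μ)
    (hmoment' : μ[(fun a => p a - htilde (X a)) | MeasurableSpace.comap Z inferInstance]
      =ᵐ[μ] 0) :
    (fun a => htilde (X a)) =ᵐ[μ] (fun a => h (X a)) :=
  stmt_1_general μ p X Z hpint complete h hh hhint hmoment htilde hht hhtint hmoment'
end

section
/- Let H be the J×J matrix with H_{jk} = κ for j ≠ k and H_{jj} = 1, where 0 ≤ κ ≤ 1, and let D' be the logit price-derivative matrix with α < 0 and shares s_j ∈ (0,1), Σ s_j < 1. Then the matrix −(H ⊙ D') is invertible. -/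
/-!
Each row of `M` is strictly diagonally dominant: the diagonal entry is `(-α) sₖ (1 - sₖ)`, while
the off-diagonal entries of row `k` have absolute values `κ (-α) sₖ sⱼ ≤ (-α) sₖ sⱼ`, which sum to
less than `(-α) sₖ (1 - sₖ)` because the outside good has positive share `1 - ∑ sⱼ`.
Gershgorin's theorem then rules out the eigenvalue `0`.
-/

open Finset

theorem Matrix.det_ne_zero_of_abs_le_mul_share {ι : Type*} [Fintype ι] [DecidableEq ι]
    (M : Matrix ι ι ℝ) (c s : ι → ℝ) (hc : ∀ k, 0 < c k) (hsum : ∑ j, s j < 1)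
    (hdiag : ∀ k, M k k = c k * (1 - s k)) (hoff : ∀ k j, k ≠ j → |M k j| ≤ c k * s j) :
    M.det ≠ 0 := by
  refine det_ne_zero_of_sum_row_lt_diag fun k ↦ ?_
  have hrest : ∑ j ∈ univ.erase k, s j = ∑ j, s j - s k := by
    rw [← add_sum_erase univ s (mem_univ k)]; ring
  calc ∑ j ∈ univ.erase k, ‖M k j‖
      ≤ ∑ j ∈ univ.erase k, c k * s j :=
        sum_le_sum fun j hj ↦ hoff k j (Ne.symm (ne_of_mem_erase hj))
    _ = c k * (∑ j, s j - s k) := by rw [← mul_sum, hrest]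
    _ < c k * (1 - s k) := by gcongr; exact hc k
    _ ≤ ‖M k k‖ := hdiag k ▸ le_abs_self _

/-- Invertibility of `−(H ⊙ D')` for the profit-weight ownership matrix
(`H_{jj} = 1`, `H_{jk} = κ`) and the logit Jacobian `D'`. -/
theorem stmt_7 {J : ℕ} (α κ : ℝ) (hα : α < 0) (hκ0 : 0 ≤ κ) (hκ1 : κ ≤ 1)
    (s : Fin J → ℝ) (hs : ∀ j, 0 < s j) (hsum : ∑ j, s j < 1)
    (M : Matrix (Fin J) (Fin J) ℝ)
    (hM : ∀ j k, M j k =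
      if j = k then -(1 * (α * s j * (1 - s j))) else -(κ * (-(α * s j * s k)))) :
    IsUnit M.det := by
  refine isUnit_iff_ne_zero.mpr <|
    M.det_ne_zero_of_abs_le_mul_share (fun k ↦ -α * s k) s
      (fun k ↦ mul_pos (neg_pos.mpr hα) (hs k)) hsum (fun k ↦ by simp [hM]) ?_
  intro k j hkj
  have hoff : M k j = κ * (α * s k * s j) := by rw [hM, if_neg hkj]; ring
  have hneg : α * s k * s j < 0 := mul_neg_of_neg_of_pos (mul_neg_of_neg_of_pos hα (hs k)) (hs j)
  rw [hoff, abs_mul, abs_of_nonneg hκ0, abs_of_neg hneg, neg_mul_eq_neg_mul, neg_mul_eq_neg_mul]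
  exact mul_le_of_le_one_left (by linarith) hκ1
end

section
/- Holm's step-down simultaneous coverage: let ψ̂_1,…,ψ̂_d be estimators with ψ̂_j ± σ_j T_{α/(d+1−k)} being, for each fixed ordering, marginal confidence bounds where P(|ψ̂_j − ψ_j| > σ_j T_β) ≤ β for every β. Then the union over all d! permutations of the Holm-ordered intervals contains the true vector (ψ_1,…,ψ_d) with probability at least 1 − α·Σ_{k=1}^d 1/(d+1−k) ≥ 1 − α·d·H_d, and in particular for d=1 coverage is at least 1 − α. -/
/-!
Rank `k` of a Holm ordering is tested at level `α / (d + 1 - k)`, so for any fixed ordering the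
union bound makes the `d` marginal failure probabilities sum to `α H_d`, since the levels
`1 / (d + 1 - k)` are the harmonic terms in reverse order. The union over all orderings contains
the box of any single one, and `H_d ≤ d H_d`.
-/

open MeasureTheory

section UnionBound

variable {Ω ι : Type*} [MeasurableSpace Ω] [Fintype ι]

theorem ofReal_one_sub_sum_le_measure_iInter_compl (μ : Measure Ω) [IsProbabilityMeasure μ]
    (A : ι → Set Ω) (b : ι → ℝ) (hb : ∀ i, 0 ≤ b i)
    (hA : ∀ i, μ (A i) ≤ ENNReal.ofReal (b i)) :
    ENNReal.ofReal (1 - ∑ i, b i) ≤ μ (⋂ i, (A i)ᶜ) := by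
  have hunion : μ (⋃ i, A i) ≤ ENNReal.ofReal (∑ i, b i) := by
    rw [ENNReal.ofReal_sum_of_nonneg fun i _ => hb i]
    exact (measure_iUnion_fintype_le μ A).trans (Finset.sum_le_sum fun i _ => hA i)
  have hsplit : 1 ≤ μ (⋃ i, A i) + μ (⋃ i, A i)ᶜ := by
    simpa using measure_univ_le_add_compl (μ := μ) (⋃ i, A i)
  rw [ENNReal.ofReal_sub _ (Finset.sum_nonneg fun i _ => hb i), ENNReal.ofReal_one,
    tsub_le_iff_left, ← Set.compl_iUnion]
  exact hsplit.trans (add_le_add_left hunion _)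

theorem ofReal_one_sub_sum_le_measure_forall_abs_sub_le (μ : Measure Ω) [IsProbabilityMeasure μ]
    (ψhat : ι → Ω → ℝ) (ψ σ : ι → ℝ) (T : ℝ → ℝ)
    (hmarg : ∀ j, ∀ β : ℝ, 0 < β → β < 1 →
      μ {a | σ j * T β < |ψhat j a - ψ j|} ≤ ENNReal.ofReal β)
    (β : ι → ℝ) (hβ0 : ∀ j, 0 < β j) (hβ1 : ∀ j, β j < 1) :
    ENNReal.ofReal (1 - ∑ j, β j) ≤
      μ {a | ∀ j, |ψhat j a - ψ j| ≤ σ j * T (β j)} := by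
  convert ofReal_one_sub_sum_le_measure_iInter_compl μ
    (fun j => {a | σ j * T (β j) < |ψhat j a - ψ j|}) β (fun j => (hβ0 j).le)
    (fun j => hmarg j _ (hβ0 j) (hβ1 j)) using 2
  ext a
  simp

end UnionBound

section HolmLevels

variable {d : ℕ}

theorem one_le_natCast_sub_fin (k : Fin d) : (1 : ℝ) ≤ (d : ℝ) - (k : ℕ) := by
  have : ((k : ℕ) : ℝ) + 1 ≤ d := by exact_mod_cast k.2
  linarith

theorem sum_range_one_div_natCast_sub (d : ℕ) :
    ∑ k ∈ Finset.range d, (1 : ℝ) / ((d : ℝ) - k) =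
      ∑ k ∈ Finset.range d, (1 : ℝ) / ((k : ℝ) + 1) := by
  rw [← Finset.sum_range_reflect]
  refine Finset.sum_congr rfl fun k hk => ?_
  have hk : k + 1 ≤ d := Finset.mem_range.mp hk
  rw [show d - 1 - k = d - (k + 1) by omega, Nat.cast_sub hk]
  push_cast
  ring_nf

theorem sum_holm_levels (α : ℝ) (π : Equiv.Perm (Fin d)) :
    ∑ j, α / ((d : ℝ) - (π j : ℕ)) = α * ∑ k ∈ Finset.range d, (1 : ℝ) / ((d : ℝ) - k) := by
  rw [Equiv.sum_comp π fun j : Fin d => α / ((d : ℝ) - (j : ℕ)),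
    Fin.sum_univ_eq_sum_range (fun k => α / ((d : ℝ) - k)), Finset.mul_sum]
  simp only [mul_one_div]

theorem holm_coverage {Ω : Type*} [MeasurableSpace Ω] (μ : Measure Ω) [IsProbabilityMeasure μ]
    (ψhat : Fin d → Ω → ℝ) (ψ σ : Fin d → ℝ) (T : ℝ → ℝ) {α : ℝ}
    (hα0 : 0 < α) (hα1 : α < 1)
    (hmarg : ∀ j, ∀ β : ℝ, 0 < β → β < 1 →
      μ {a | σ j * T β < |ψhat j a - ψ j|} ≤ ENNReal.ofReal β)
    (π : Equiv.Perm (Fin d)) :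
    ENNReal.ofReal (1 - α * ∑ k ∈ Finset.range d, (1 : ℝ) / ((d : ℝ) - k)) ≤
      μ {a | ∀ j, |ψhat j a - ψ j| ≤ σ j * T (α / ((d : ℝ) - (π j : ℕ)))} := by
  rw [← sum_holm_levels α π]
  refine ofReal_one_sub_sum_le_measure_forall_abs_sub_le μ ψhat ψ σ T hmarg _
    (fun j => div_pos hα0 (one_pos.trans_le (one_le_natCast_sub_fin (π j)))) fun j => ?_
  calc α / ((d : ℝ) - (π j : ℕ)) ≤ α := div_le_self hα0.le (one_le_natCast_sub_fin (π j))
    _ < 1 := hα1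

theorem holm_union_coverage {Ω : Type*} [MeasurableSpace Ω] (μ : Measure Ω)
    [IsProbabilityMeasure μ] (ψhat : Fin d → Ω → ℝ) (ψ σ : Fin d → ℝ) (T : ℝ → ℝ) {α : ℝ}
    (hα0 : 0 < α) (hα1 : α < 1)
    (hmarg : ∀ j, ∀ β : ℝ, 0 < β → β < 1 →
      μ {a | σ j * T β < |ψhat j a - ψ j|} ≤ ENNReal.ofReal β) :
    ENNReal.ofReal (1 - α * ∑ k ∈ Finset.range d, (1 : ℝ) / ((d : ℝ) - k)) ≤
      μ {a | ∃ π : Equiv.Perm (Fin d),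
        ∀ j, |ψhat j a - ψ j| ≤ σ j * T (α / ((d : ℝ) - (π j : ℕ)))} :=
  (holm_coverage μ ψhat ψ σ T hα0 hα1 hmarg 1).trans (measure_mono fun _ ha => ⟨1, ha⟩)

end HolmLevels

theorem stmt_12_general {Ω : Type*} [MeasurableSpace Ω] (μ : Measure Ω) [IsProbabilityMeasure μ]
    {d : ℕ}
    (ψhat : Fin d → Ω → ℝ) (ψ σ : Fin d → ℝ) (T : ℝ → ℝ) (α : ℝ)
    (hα0 : 0 < α) (hα1 : α < 1)
    (hmarg : ∀ j, ∀ β : ℝ, 0 < β → β < 1 →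
      μ {a | σ j * T β < |ψhat j a - ψ j|} ≤ ENNReal.ofReal β) :
    ENNReal.ofReal (1 - α * ∑ k ∈ Finset.range d, (1 : ℝ) / ((d : ℝ) - k)) ≤
      μ {a | ∃ π : Equiv.Perm (Fin d),
        ∀ j, |ψhat j a - ψ j| ≤ σ j * T (α / ((d : ℝ) - (π j : ℕ)))} ∧
    1 - α * ∑ k ∈ Finset.range d, (1 : ℝ) / ((d : ℝ) - k) ≥
      1 - α * d * ∑ k ∈ Finset.range d, (1 : ℝ) / ((k : ℝ) + 1) ∧
    (d = 1 → ENNReal.ofReal (1 - α) ≤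
      μ {a | ∃ π : Equiv.Perm (Fin d),
        ∀ j, |ψhat j a - ψ j| ≤ σ j * T (α / ((d : ℝ) - (π j : ℕ)))}) := by
  have hcov := holm_union_coverage μ ψhat ψ σ T hα0 hα1 hmarg
  refine ⟨hcov, ?_, fun hd => ?_⟩
  · have hH : 0 ≤ ∑ k ∈ Finset.range d, (1 : ℝ) / ((k : ℝ) + 1) :=
      Finset.sum_nonneg fun k _ => by positivity
    rw [sum_range_one_div_natCast_sub, ge_iff_le, sub_le_sub_iff_left, mul_assoc]
    refine mul_le_mul_of_nonneg_left ?_ hα0.le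
    rcases Nat.eq_zero_or_pos d with rfl | hd
    · simp
    · exact le_mul_of_one_le_left hH (by exact_mod_cast hd)
  · subst hd
    simpa using hcov

/-- Holm step-down simultaneous coverage: the union over all `d!` permutations of the
Holm-ordered boxes (coordinate `j` in rank `k = π(j)+1` using critical value
`T(α/(d+1−k))`) covers the true vector with probability at least
`1 − α ∑_{k=1}^d 1/(d+1−k)`, which is at least `1 − α d H_d`; for `d = 1` coverage is
at least `1 − α`. -/
theorem stmt_12 {Ω : Type*} [MeasurableSpace Ω] (μ : Measure Ω) [IsProbabilityMeasure μ]
    {d : ℕ} (hd : 1 ≤ d)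
    (ψhat : Fin d → Ω → ℝ) (ψ σ : Fin d → ℝ) (T : ℝ → ℝ) (α : ℝ)
    (hα0 : 0 < α) (hα1 : α < 1)
    (hmarg : ∀ j, ∀ β : ℝ, 0 < β → β < 1 →
      μ {a | σ j * T β < |ψhat j a - ψ j|} ≤ ENNReal.ofReal β) :
    ENNReal.ofReal (1 - α * ∑ k ∈ Finset.range d, (1 : ℝ) / ((d : ℝ) - k)) ≤
      μ {a | ∃ π : Equiv.Perm (Fin d),
        ∀ j, |ψhat j a - ψ j| ≤ σ j * T (α / ((d : ℝ) - (π j : ℕ)))} ∧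
    1 - α * ∑ k ∈ Finset.range d, (1 : ℝ) / ((d : ℝ) - k) ≥
      1 - α * d * ∑ k ∈ Finset.range d, (1 : ℝ) / ((k : ℝ) + 1) ∧
    (d = 1 → ENNReal.ofReal (1 - α) ≤
      μ {a | ∃ π : Equiv.Perm (Fin d),
        ∀ j, |ψhat j a - ψ j| ≤ σ j * T (α / ((d : ℝ) - (π j : ℕ)))}) :=
  stmt_12_general μ ψhat ψ σ T α hα0 hα1 hmarg
end
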